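/- arXiv:0910.0120 — 3 statements merged into one kernel-verified Lean document; each statement's English description precedes it below -/
import Mathlib

section
/- Let F(x) = x + \sum_{n\ge 2} e_n x^n with e_n = \prod_{i=2}^{n-1}(i-q), and let F_\delta(y) = \sum_{n\ge 1} a_n y^n be its compositional inverse (so a_1 = 1). Then the coefficients satisfy, for all n \ge 2: a_n = -\sum_{k+l=n+1, k,l\ge 2} k a_k a_l + \sum_{k+l=n} (qk - 1) a_k a_l - q \sum_{k+l+m=n+1} k a_k a_l a_m. -/
open PowerSeries Finset

/-- Composition of formal power series (intended for second argument with zero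
constant coefficient). -/
noncomputable def PS.comp {R : Type*} [CommRing R] (f g : PowerSeries R) : PowerSeries R :=
  PowerSeries.mk fun n => ∑ k ∈ Finset.range (n + 1), (coeff k f) * coeff n (g ^ k)

/-- `F(x) = x + ∑_{n ≥ 2} (∏_{i=2}^{n-1}(i - q)) xⁿ`. -/
noncomputable def FSeries : PowerSeries (Polynomial ℚ) :=
  PowerSeries.mk fun n =>
    if n = 0 then 0 else ∏ i ∈ Finset.Icc 2 (n - 1), ((i : Polynomial ℚ) - Polynomial.X)

/-! `F` satisfies `F = x + q x² + x² F' - q x F`; in degree `n + 1 ≥ 3` this is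
`e_{n+1} = (n - q) e_n`. Substituting `x = F_δ(y)`, multiplying by `F_δ'(y)` and using the chain
rule `F'(F_δ) F_δ' = 1` gives
`y F_δ' = F_δ F_δ' + q F_δ² F_δ' + F_δ² - q y F_δ F_δ'`.
Since `y F_δ'` has coefficients `k a_k`, the coefficient of `y^{n+1}` in `y` times this identity is
`n a_n = ∑_{k+l=n+1} k a_k a_l - ∑_{k+l=n} (qk - 1) a_k a_l + q ∑_{k+l+m=n+1} k a_k a_l a_m`,
and separating the terms with `a_1 = 1` from the first sum gives the recurrence. -/

section

variable {R : Type*} [CommRing R]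

theorem PS.comp_eq_subst {f g : R⟦X⟧} (hg : constantCoeff g = 0) : PS.comp f g = f.subst g := by
  ext n
  rw [PS.comp, coeff_mk, coeff_subst' (HasSubst.of_constantCoeff_zero' hg),
    finsum_eq_sum_of_support_subset (s := range (n + 1))]
  · simp only [smul_eq_mul]
  refine Function.support_subset_iff'.mpr fun k hk => ?_
  rw [coe_range, Set.mem_Iio, not_lt] at hk
  rw [smul_eq_mul, coeff_of_lt_order n ((Nat.cast_lt.mpr hk).trans_le
    (le_order_pow_of_constantCoeff_eq_zero k hg)), mul_zero]

theorem derivative_subst_mul_derivative_eq_one {f g : R⟦X⟧} (hg : HasSubst g)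
    (hfg : f.subst g = X) : (d⁄dX R f).subst g * d⁄dX R g = 1 := by
  rw [← derivative_subst hg, hfg, derivative_X]

theorem coeff_X_mul_derivative (f : R⟦X⟧) (n : ℕ) :
    coeff n (X * d⁄dX R f) = n * coeff n f := by
  cases n with
  | zero => simp
  | succ n => rw [coeff_succ_X_mul, coeff_derivative, mul_comm]; push_cast; rfl

theorem coeff_mul_mul (f g h : R⟦X⟧) (m : ℕ) :
    coeff m (f * g * h) =
      ∑ t ∈ (range (m + 1) ×ˢ range (m + 1) ×ˢ range (m + 1)).filter
          (fun t => t.1 + t.2.1 + t.2.2 = m),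
        coeff t.1 f * coeff t.2.1 g * coeff t.2.2 h := by
  simp_rw [coeff_mul, sum_mul, sum_sigma']
  refine sum_nbij' (fun x => (x.2.1, x.2.2, x.1.2))
    (fun t => ⟨(t.1 + t.2.1, t.2.2), (t.1, t.2.1)⟩) ?_ ?_ ?_ ?_ ?_
  · rintro ⟨⟨i, k⟩, ⟨i₁, i₂⟩⟩ hx
    simp only [mem_sigma, HasAntidiagonal.mem_antidiagonal] at hx
    simp only [mem_filter, mem_product, mem_range]
    omega
  · rintro ⟨i, j, k⟩ ht
    simp only [mem_filter, mem_product, mem_range] at ht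
    simp only [mem_sigma, HasAntidiagonal.mem_antidiagonal, and_true]
    omega
  · rintro ⟨⟨i, k⟩, ⟨i₁, i₂⟩⟩ hx
    simp only [mem_sigma, HasAntidiagonal.mem_antidiagonal] at hx
    simp [hx.2]
  · intro t _; rfl
  · intro x _; rfl

end

section

variable {M : Type*} [AddCommMonoid M] (f : ℕ × ℕ → M)

theorem sum_filter_one_le_antidiagonal (hf : ∀ p : ℕ × ℕ, p.1 = 0 ∨ p.2 = 0 → f p = 0)
    (n : ℕ) :
    ∑ p ∈ (antidiagonal n).filter (fun p => 1 ≤ p.1 ∧ 1 ≤ p.2), f p =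
      ∑ p ∈ antidiagonal n, f p :=
  sum_filter_of_ne fun p _ hp => by
    contrapose! hp
    exact hf p (by omega)

theorem sum_antidiagonal_succ_eq_sum_filter_two_le
    (hf : ∀ p : ℕ × ℕ, p.1 = 0 ∨ p.2 = 0 → f p = 0) {n : ℕ} (hn : 2 ≤ n) :
    ∑ p ∈ antidiagonal (n + 1), f p =
      ∑ p ∈ (antidiagonal (n + 1)).filter (fun p => 2 ≤ p.1 ∧ 2 ≤ p.2), f p
        + (f (1, n) + f (n, 1)) := by
  rw [← sum_filter_add_sum_filter_not _ (fun p => 2 ≤ p.1 ∧ 2 ≤ p.2),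
    ← sum_pair (show ((1, n) : ℕ × ℕ) ≠ (n, 1) by simp; omega)]
  congr 1
  refine (sum_subset (fun p hp => ?_) fun p hp hp' => hf p ?_).symm
  · simp only [mem_insert, mem_singleton] at hp
    simp only [mem_filter, HasAntidiagonal.mem_antidiagonal]
    rcases hp with rfl | rfl <;> omega
  · simp only [mem_filter, HasAntidiagonal.mem_antidiagonal, mem_insert, mem_singleton,
      Prod.ext_iff] at hp hp'
    omega

theorem sum_filter_Icc_eq_sum_filter_range (f : ℕ × ℕ × ℕ → M)
    (hf : ∀ t : ℕ × ℕ × ℕ, t.1 = 0 ∨ t.2.1 = 0 ∨ t.2.2 = 0 → f t = 0) (n : ℕ) :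
    ∑ t ∈ (Icc 1 n ×ˢ Icc 1 n ×ˢ Icc 1 n).filter (fun t => t.1 + t.2.1 + t.2.2 = n + 1),
        f t =
      ∑ t ∈ (range (n + 1 + 1) ×ˢ range (n + 1 + 1) ×ˢ range (n + 1 + 1)).filter
        (fun t => t.1 + t.2.1 + t.2.2 = n + 1), f t := by
  refine sum_subset (fun t ht => ?_) fun t ht ht' => hf t ?_
  · simp only [mem_filter, mem_product, mem_Icc, mem_range] at ht ⊢
    omega
  · simp only [mem_filter, mem_product, mem_Icc, mem_range] at ht ht'
    omega

end

local notation "q" => (Polynomial.X : Polynomial ℚ)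

theorem coeff_FSeries_succ {n : ℕ} (hn : 2 ≤ n) :
    coeff (n + 1) FSeries = (n - q) * coeff n FSeries := by
  obtain ⟨m, rfl⟩ := Nat.exists_eq_add_of_le' (show 1 ≤ n by omega)
  simp only [FSeries, coeff_mk, Nat.add_sub_cancel, if_neg (Nat.succ_ne_zero _)]
  rw [prod_Icc_succ_top (by omega), mul_comm]

theorem FSeries_eq :
    FSeries = X + C q * X ^ 2 + X ^ 2 * d⁄dX _ FSeries - C q * X * FSeries := by
  refine PowerSeries.ext fun n => ?_
  rw [pow_two X, mul_assoc X, mul_assoc (C q), map_sub, map_add, map_add, coeff_C_mul,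
    coeff_C_mul]
  rcases n with _ | n
  · simp [FSeries]
  rw [coeff_succ_X_mul, coeff_succ_X_mul, coeff_succ_X_mul, coeff_X_mul_derivative, coeff_X,
    coeff_X]
  rcases n with _ | _ | n
  · simp [FSeries]
  · simp [FSeries]
  · rw [coeff_FSeries_succ (by omega), if_neg (by omega), if_neg (by omega)]
    push_cast
    ring

theorem X_mul_derivative_eq_of_FSeries_subst_eq_X {G : (Polynomial ℚ)⟦X⟧}
    (hG : constantCoeff G = 0) (hFG : FSeries.subst G = X) :
    X * d⁄dX _ G =
      G * d⁄dX _ G + C q * G ^ 2 * d⁄dX _ G + G ^ 2 - C q * G * (X * d⁄dX _ G) := by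
  have hs := HasSubst.of_constantCoeff_zero' hG
  have hX : X = G + C q * G ^ 2 + G ^ 2 * (d⁄dX _ FSeries).subst G - C q * G * X := by
    conv_lhs => rw [← hFG, FSeries_eq]
    simp only [subst_sub hs, subst_add hs, subst_mul hs, subst_pow hs, subst_X hs, subst_C, hFG]
    rfl
  have hchain := derivative_subst_mul_derivative_eq_one hs hFG
  linear_combination (d⁄dX _ G) * hX + G ^ 2 * hchain

theorem nat_mul_coeff_eq_of_FSeries_subst_eq_X {G : (Polynomial ℚ)⟦X⟧}
    (hG : constantCoeff G = 0) (hFG : FSeries.subst G = X) (n : ℕ) :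
    (n : Polynomial ℚ) * coeff n G =
      ∑ p ∈ antidiagonal (n + 1), (p.1 : Polynomial ℚ) * coeff p.1 G * coeff p.2 G
      - ∑ p ∈ antidiagonal n, (q * p.1 - 1) * coeff p.1 G * coeff p.2 G
      + q * ∑ t ∈ (range (n + 1 + 1) ×ˢ range (n + 1 + 1) ×ˢ range (n + 1 + 1)).filter
          (fun t => t.1 + t.2.1 + t.2.2 = n + 1),
        (t.1 : Polynomial ℚ) * coeff t.1 G * coeff t.2.1 G * coeff t.2.2 G := by
  have key : X * (X * d⁄dX _ G) =
      X * d⁄dX _ G * G + C q * (X * d⁄dX _ G * G * G) + X * (G * G)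
        - C q * (X * (X * d⁄dX _ G * G)) := by
    linear_combination X * X_mul_derivative_eq_of_FSeries_subst_eq_X hG hFG
  have hXDG (m : ℕ) : coeff m (X * d⁄dX _ G * G) =
      ∑ p ∈ antidiagonal m, (p.1 : Polynomial ℚ) * coeff p.1 G * coeff p.2 G := by
    rw [coeff_mul]
    exact sum_congr rfl fun p _ => by rw [coeff_X_mul_derivative]
  have hXDGG : coeff (n + 1) (X * d⁄dX _ G * G * G) =
      ∑ t ∈ (range (n + 1 + 1) ×ˢ range (n + 1 + 1) ×ˢ range (n + 1 + 1)).filter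
          (fun t => t.1 + t.2.1 + t.2.2 = n + 1),
        (t.1 : Polynomial ℚ) * coeff t.1 G * coeff t.2.1 G * coeff t.2.2 G := by
    rw [coeff_mul_mul]
    exact sum_congr rfl fun t _ => by rw [coeff_X_mul_derivative]
  have hGG : coeff n (G * G) - q * coeff n (X * d⁄dX _ G * G) =
      -∑ p ∈ antidiagonal n, (q * p.1 - 1) * coeff p.1 G * coeff p.2 G := by
    rw [hXDG, coeff_mul, mul_sum, ← sum_sub_distrib, ← sum_neg_distrib]
    exact sum_congr rfl fun p _ => by ring
  have hcoeff := congrArg (coeff (n + 1)) key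
  rw [map_sub, map_add, map_add, coeff_C_mul, coeff_C_mul, coeff_succ_X_mul, coeff_succ_X_mul,
    coeff_succ_X_mul, coeff_X_mul_derivative, hXDG, hXDGG] at hcoeff
  linear_combination hcoeff + hGG

theorem inverse_coeff_recurrence_general (Fδ : PowerSeries (Polynomial ℚ))
    (h0 : coeff 0 Fδ = 0) (h1 : coeff 1 Fδ = 1)
    (hr : PS.comp FSeries Fδ = PowerSeries.X)
    (a : ℕ → Polynomial ℚ) (ha : ∀ n, a n = coeff n Fδ) :
    ∀ n, 2 ≤ n →
      a n =
        -(∑ p ∈ (Finset.HasAntidiagonal.antidiagonal (n + 1)).filter (fun p => 2 ≤ p.1 ∧ 2 ≤ p.2),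
            (p.1 : Polynomial ℚ) * a p.1 * a p.2)
        + (∑ p ∈ (Finset.HasAntidiagonal.antidiagonal n).filter (fun p => 1 ≤ p.1 ∧ 1 ≤ p.2),
            (Polynomial.X * (p.1 : Polynomial ℚ) - 1) * a p.1 * a p.2)
        - Polynomial.X *
          (∑ t ∈ (Finset.Icc 1 n ×ˢ Finset.Icc 1 n ×ˢ Finset.Icc 1 n).filter
              (fun t => t.1 + t.2.1 + t.2.2 = n + 1),
            (t.1 : Polynomial ℚ) * a t.1 * a t.2.1 * a t.2.2) := by
  intro n hn
  obtain rfl : a = fun k => coeff k Fδ := funext ha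
  have hG : constantCoeff Fδ = 0 := by rwa [← coeff_zero_eq_constantCoeff_apply]
  have hpair (p : ℕ × ℕ) (hp : p.1 = 0 ∨ p.2 = 0) (w : Polynomial ℚ) :
      w * coeff p.1 Fδ * coeff p.2 Fδ = 0 := by
    rcases hp with hp | hp <;> simp [hp, h0]
  have htriple (t : ℕ × ℕ × ℕ) (ht : t.1 = 0 ∨ t.2.1 = 0 ∨ t.2.2 = 0) :
      (t.1 : Polynomial ℚ) * coeff t.1 Fδ * coeff t.2.1 Fδ * coeff t.2.2 Fδ = 0 := by
    rcases ht with ht | ht | ht <;> simp [ht, h0]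
  have hid := nat_mul_coeff_eq_of_FSeries_subst_eq_X hG (by rwa [← PS.comp_eq_subst hG]) n
  rw [sum_antidiagonal_succ_eq_sum_filter_two_le _ (fun p hp => hpair p hp _) hn, h1]
    at hid
  rw [sum_filter_one_le_antidiagonal _ (fun p hp => hpair p hp _),
    sum_filter_Icc_eq_sum_filter_range _ htriple]
  linear_combination -hid

theorem inverse_coeff_recurrence (Fδ : PowerSeries (Polynomial ℚ))
    (h0 : coeff 0 Fδ = 0) (h1 : coeff 1 Fδ = 1)
    (hl : PS.comp Fδ FSeries = PowerSeries.X)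
    (hr : PS.comp FSeries Fδ = PowerSeries.X)
    (a : ℕ → Polynomial ℚ) (ha : ∀ n, a n = coeff n Fδ) :
    ∀ n, 2 ≤ n →
      a n =
        -(∑ p ∈ (Finset.HasAntidiagonal.antidiagonal (n + 1)).filter (fun p => 2 ≤ p.1 ∧ 2 ≤ p.2),
            (p.1 : Polynomial ℚ) * a p.1 * a p.2)
        + (∑ p ∈ (Finset.HasAntidiagonal.antidiagonal n).filter (fun p => 1 ≤ p.1 ∧ 1 ≤ p.2),
            (Polynomial.X * (p.1 : Polynomial ℚ) - 1) * a p.1 * a p.2)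
        - Polynomial.X *
          (∑ t ∈ (Finset.Icc 1 n ×ˢ Finset.Icc 1 n ×ˢ Finset.Icc 1 n).filter
              (fun t => t.1 + t.2.1 + t.2.2 = n + 1),
            (t.1 : Polynomial ℚ) * a t.1 * a t.2.1 * a t.2.2) :=
  inverse_coeff_recurrence_general Fδ h0 h1 hr a ha
end

section
/- Let u(x) = x - \sum_{i\ge 2} u_i x^i be a formal power series over a commutative \mathbb{Q}-algebra, and let v(x) = x + \sum_{i\ge 2} v_i x^i be its compositional inverse. Then for all n \ge 2, v_n = \sum_{\lambda \vdash n-1} P(\lambda) \prod_{i\ge 1} u_{i+1}^{\lambda_i}, where for a partition \lambda of n-1 with \lambda_i parts equal to i, P(\lambda) = (n - 1 + \sum_i \lambda_i)! / (n! \prod_i \lambda_i!). -/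
open PowerSeries Finset

/-- `P(λ) = (n-1+∑ᵢ λᵢ)! / (n! ∏ᵢ λᵢ!)` for `λ ⊢ n-1`, where `λᵢ` is the
multiplicity of `i` in `λ`. -/
noncomputable def Pcoeff (n : ℕ) (lam : Nat.Partition (n - 1)) : ℚ :=
  ((n - 1 + lam.parts.card).factorial : ℚ) /
    ((n.factorial : ℚ) * ∏ i ∈ Finset.Icc 1 (n - 1), ((lam.parts.count i).factorial : ℚ))

/-!
Write `u = x g` and let `h = 1/g`. Differentiating `v(u(x)) = x` gives `v'(u) u' = 1`, so the
coefficient of `x^(n-1)` in `h^n v'(u) u'` is that of `h^n`. Computed term by term it is `n v_n`,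
because the coefficient of `x^j` in `h^(j+1) u'` is the residue of `u^(-(j+1)) u'`, which vanishes
for `j ≥ 1` (it is the residue of the derivative `-(u^(-j))'/j`). Finally, with
`w = 1 - g = ∑_{i ≥ 1} (-u_{i+1}) x^i`, expand `h^n = (1 - w)^(-n) = ∑_m C(n-1+m, m) w^m`, and
the coefficient of `x^(n-1)` in `w^m` by the multinomial theorem as a sum over the partitions of
`n - 1` into `m` parts.
-/

namespace Nat.Partition

variable {N : ℕ} (p : N.Partition)

theorem mem_Icc_of_mem_parts {i : ℕ} (hi : i ∈ p.parts) : i ∈ Icc 1 N :=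
  mem_Icc.mpr ⟨p.parts_pos hi, p.le_of_mem_parts hi⟩

theorem card_parts_le : Multiset.card p.parts ≤ N := by
  simpa [p.parts_sum] using Multiset.card_nsmul_le_sum (a := 1) fun _ hi => p.parts_pos hi

theorem prod_map_parts {M : Type*} [CommMonoid M] (f : ℕ → M) :
    (p.parts.map f).prod = ∏ i ∈ Icc 1 N, f i ^ p.parts.count i := by
  rw [prod_multiset_map_count]
  refine prod_subset (fun i hi => p.mem_Icc_of_mem_parts (Multiset.mem_toFinset.mp hi))
    fun i _ hi => ?_
  rw [Multiset.count_eq_zero_of_notMem (mt Multiset.mem_toFinset.mpr hi), pow_zero]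

theorem countPerms_parts_mul_prod_factorial :
    p.parts.countPerms * ∏ i ∈ Icc 1 N, (p.parts.count i).factorial =
      (Multiset.card p.parts).factorial := by
  have hsupp : (Multiset.toFinsupp p.parts).support ⊆ Icc 1 N := by
    rw [Multiset.toFinsupp_support]
    exact fun i hi => p.mem_Icc_of_mem_parts (Multiset.mem_toFinset.mp hi)
  rw [Multiset.countPerms, Finsupp.multinomial_eq_of_support_subset hsupp, mul_comm,
    ← Multiset.sum_count_eq_card fun _ => p.mem_Icc_of_mem_parts]
  exact Nat.multinomial_spec _ _

end Nat.Partition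

namespace PowerSeries

variable {R : Type*} [CommRing R]

theorem coeff_pow_eq_zero_of_lt {w : R⟦X⟧} (hw : constantCoeff w = 0) {d k : ℕ} (hdk : d < k) :
    coeff d (w ^ k) = 0 :=
  X_pow_dvd_iff.mp (pow_dvd_pow_of_dvd (X_dvd_iff.mpr hw) k) d hdk

theorem coeff_subst_eq_sum_range {w : R⟦X⟧} (hw : constantCoeff w = 0) (f : R⟦X⟧) {d K : ℕ}
    (hdK : d < K) : coeff d (f.subst w) = ∑ k ∈ range K, coeff k f * coeff d (w ^ k) := by
  rw [coeff_subst' (HasSubst.of_constantCoeff_zero' hw), finsum_eq_sum_of_support_subset]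
  · rfl
  intro k hk
  rw [coe_range, Set.mem_Iio]
  by_contra! hKk
  exact hk (smul_eq_zero_of_right _ (coeff_pow_eq_zero_of_lt hw (hdK.trans_le hKk)))

theorem _root_.PS.comp_eq_subst_s5 {g : R⟦X⟧} (hg : constantCoeff g = 0) (f : R⟦X⟧) :
    PS.comp f g = f.subst g := by
  ext n
  rw [PS.comp, coeff_mk, coeff_subst_eq_sum_range hg f n.lt_succ_self]

theorem coeff_subst_mul {w : R⟦X⟧} (hw : constantCoeff w = 0) (f q : R⟦X⟧) (n : ℕ) :
    coeff n (f.subst w * q) = ∑ k ∈ range (n + 1), coeff k f * coeff n (w ^ k * q) := by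
  rw [coeff_mul]
  calc ∑ p ∈ antidiagonal n, coeff p.1 (f.subst w) * coeff p.2 q
      = ∑ p ∈ antidiagonal n, ∑ k ∈ range (n + 1),
          coeff k f * (coeff p.1 (w ^ k) * coeff p.2 q) := by
        refine sum_congr rfl fun p hp => ?_
        rw [coeff_subst_eq_sum_range hw f (Nat.antidiagonal.fst_lt hp), sum_mul]
        simp only [mul_assoc]
    _ = ∑ k ∈ range (n + 1), coeff k f * coeff n (w ^ k * q) := by
        rw [sum_comm]
        simp only [coeff_mul, mul_sum]

theorem derivative_inv_of_mul_eq_one {g h : R⟦X⟧} (hgh : g * h = 1) :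
    d⁄dX R h = -(h ^ 2 * d⁄dX R g) := by
  have h0 := congrArg (d⁄dX R) hgh
  rw [Derivation.leibniz, derivative_one, smul_eq_mul, smul_eq_mul] at h0
  linear_combination h * h0 - d⁄dX R h * hgh

theorem coeff_pow_succ_mul_derivative_X_mul [IsAddTorsionFree R] {g h : R⟦X⟧} (hgh : g * h = 1)
    (j : ℕ) : coeff j (h ^ (j + 1) * d⁄dX R (X * g)) = if j = 0 then 1 else 0 := by
  have hsplit : h ^ (j + 1) * d⁄dX R (X * g) = h ^ j + X * (h ^ (j + 1) * d⁄dX R g) := by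
    rw [Derivation.leibniz, derivative_X, smul_eq_mul, smul_eq_mul]
    linear_combination h ^ j * hgh
  rw [hsplit, map_add]
  rcases j with _ | i
  · simp
  have hpow : coeff i (d⁄dX R (h ^ (i + 1))) = -((i + 1) • coeff i (h ^ (i + 2) * d⁄dX R g)) := by
    rw [derivative_pow, derivative_inv_of_mul_eq_one hgh, ← map_nsmul, ← map_neg, nsmul_eq_mul]
    congr 1
    push_cast
    ring
  rw [coeff_derivative] at hpow
  rw [coeff_succ_X_mul, if_neg i.succ_ne_zero]
  refine nsmul_right_injective i.succ_ne_zero ?_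
  simp only [smul_add, smul_zero, nsmul_eq_mul] at hpow ⊢
  push_cast at hpow ⊢
  linear_combination hpow

theorem natCast_mul_coeff_of_subst_eq_X [IsAddTorsionFree R] {f g h : R⟦X⟧} (hgh : g * h = 1)
    (hf : f.subst (X * g) = X) (n : ℕ) :
    ((n + 1 : ℕ) : R) * coeff (n + 1) f = coeff n (h ^ (n + 1)) := by
  set u := X * g
  have hu : constantCoeff u = 0 := by simp [u]
  have hchain : (d⁄dX R f).subst u * d⁄dX R u = 1 := by
    rw [← derivative_subst (HasSubst.of_constantCoeff_zero' hu), hf, derivative_X]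
  have hterm : ∀ k ∈ range (n + 1),
      coeff n (u ^ k * (h ^ (n + 1) * d⁄dX R u)) = if k = n then 1 else 0 := by
    intro k hk
    obtain ⟨j, rfl⟩ := Nat.exists_eq_add_of_le (Nat.le_of_lt_succ (mem_range.mp hk))
    have hshift : u ^ k * (h ^ (k + j + 1) * d⁄dX R u) = X ^ k * (h ^ (j + 1) * d⁄dX R u) := by
      have hghk : (g * h) ^ k = 1 := by rw [hgh, one_pow]
      linear_combination X ^ k * h ^ (j + 1) * d⁄dX R u * hghk
    rw [hshift, coeff_X_pow_mul', if_pos (Nat.le_add_right k j), Nat.add_sub_cancel_left,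
      coeff_pow_succ_mul_derivative_X_mul hgh j]
    simp
  calc ((n + 1 : ℕ) : R) * coeff (n + 1) f = coeff n (d⁄dX R f) := by
        rw [coeff_derivative, mul_comm]
        push_cast
        ring
    _ = ∑ k ∈ range (n + 1), coeff k (d⁄dX R f) * coeff n (u ^ k * (h ^ (n + 1) * d⁄dX R u)) := by
        rw [sum_congr rfl fun k hk => by rw [hterm k hk]]
        simp [mul_ite]
    _ = coeff n (h ^ (n + 1)) := by
        rw [← coeff_subst_mul hu, ← mul_assoc, mul_right_comm, hchain, one_mul]

theorem coeff_pow_succ_eq_sum_choose_mul {w h : R⟦X⟧} (hw : constantCoeff w = 0)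
    (hwh : (1 - w) * h = 1) (k d : ℕ) :
    coeff d (h ^ (k + 1)) = ∑ m ∈ range (d + 1), ((k + m).choose k : R) * coeff d (w ^ m) := by
  have hsubst := congrArg (substAlgHom (R := R) (HasSubst.of_constantCoeff_zero' hw))
    (mk_add_choose_mul_one_sub_pow_eq_one R k)
  rw [map_mul, map_pow, map_sub, map_one, substAlgHom_X, coe_substAlgHom] at hsubst
  have hwhk : (1 - w) ^ (k + 1) * h ^ (k + 1) = 1 := by rw [← mul_pow, hwh, one_pow]
  have hpow : h ^ (k + 1) = (mk fun m => ((k + m).choose k : R)).subst w := by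
    linear_combination (mk fun m => ((k + m).choose k : R)).subst w * hwhk - h ^ (k + 1) * hsubst
  rw [hpow, coeff_subst_eq_sum_range hw _ d.lt_succ_self]
  simp only [coeff_mk]

theorem prod_map_monomial (s : Multiset ℕ) (c : ℕ → R) :
    (s.map fun i => monomial i (c i)).prod = monomial s.sum (s.map c).prod := by
  induction s using Multiset.induction_on with
  | empty => simp
  | cons a s ih => simp [ih, monomial_mul_monomial]

theorem X_pow_succ_dvd_sub_sum_monomial {w : R⟦X⟧} (hw : constantCoeff w = 0) (N : ℕ) :
    X ^ (N + 1) ∣ w - ∑ i ∈ Icc 1 N, monomial i (coeff i w) := by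
  refine X_pow_dvd_iff.mpr fun j hj => ?_
  rw [map_sub, map_sum]
  simp only [coeff_monomial, sum_ite_eq, mem_Icc]
  rcases j with _ | j
  · simp [hw]
  · rw [if_pos ⟨j.succ_pos, Nat.le_of_lt_succ hj⟩, sub_self]

theorem coeff_pow_eq_sum_sym {w : R⟦X⟧} (hw : constantCoeff w = 0) (N m : ℕ) :
    coeff N (w ^ m) = ∑ k ∈ (Icc 1 N).sym m,
      (k : Multiset ℕ).countPerms * if (k : Multiset ℕ).sum = N then
        ((k : Multiset ℕ).map fun i => coeff i w).prod else 0 := by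
  have htrunc : coeff N (w ^ m) = coeff N ((∑ i ∈ Icc 1 N, monomial i (coeff i w)) ^ m) := by
    rw [← sub_eq_zero, ← map_sub]
    exact X_pow_dvd_iff.mp ((X_pow_succ_dvd_sub_sum_monomial hw N).trans
      (sub_dvd_pow_sub_pow _ _ m)) N N.lt_succ_self
  rw [htrunc, sum_pow, map_sum]
  refine sum_congr rfl fun k _ => ?_
  rw [← map_natCast (C (R := R)), coeff_C_mul, prod_map_monomial, coeff_monomial]
  exact congrArg _ (if_congr eq_comm rfl rfl)

theorem coeff_pow_eq_sum_partitions {w : R⟦X⟧} (hw : constantCoeff w = 0) (N m : ℕ) :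
    coeff N (w ^ m) = ∑ p : N.Partition with Multiset.card p.parts = m,
      p.parts.countPerms * (p.parts.map fun i => coeff i w).prod := by
  simp only [coeff_pow_eq_sum_sym hw, mul_ite, mul_zero, ← sum_filter]
  symm
  refine sum_bij' (fun p hp => (⟨p.parts, (mem_filter.mp hp).2⟩ : Sym ℕ m))
    (fun k hk => ⟨k, fun hi => ?_, (mem_filter.mp hk).2⟩) (fun p hp => ?_) (fun k hk => ?_)
    (fun p _ => rfl) (fun k _ => rfl) (fun p _ => rfl)
  · exact (mem_Icc.mp (mem_sym_iff.mp (mem_filter.mp hk).1 _ hi)).1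
  · exact mem_filter.mpr ⟨mem_sym_iff.mpr fun i hi => p.mem_Icc_of_mem_parts hi, p.parts_sum⟩
  · exact mem_filter.mpr ⟨mem_univ _, k.2⟩

theorem sum_range_mul_coeff_pow_eq_sum_partitions {w : R⟦X⟧} (hw : constantCoeff w = 0)
    (a : ℕ → R) (N : ℕ) :
    ∑ m ∈ range (N + 1), a m * coeff N (w ^ m) = ∑ p : N.Partition,
      a (Multiset.card p.parts) * (p.parts.countPerms * (p.parts.map fun i => coeff i w).prod) := by
  calc ∑ m ∈ range (N + 1), a m * coeff N (w ^ m)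
      = ∑ m ∈ range (N + 1), ∑ p : N.Partition with Multiset.card p.parts = m,
          a (Multiset.card p.parts) *
            (p.parts.countPerms * (p.parts.map fun i => coeff i w).prod) := by
        refine sum_congr rfl fun m _ => ?_
        rw [coeff_pow_eq_sum_partitions hw, mul_sum]
        exact sum_congr rfl fun p hp => by rw [(mem_filter.mp hp).2]
    _ = _ := sum_fiberwise_of_maps_to
        (fun p _ => mem_range.mpr (Nat.lt_succ_of_le p.card_parts_le)) _

end PowerSeries

theorem natCast_succ_mul_Pcoeff {N : ℕ} (p : N.Partition) :
    ((N + 1 : ℕ) : ℚ) * Pcoeff (N + 1) p =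
      ((N + Multiset.card p.parts).choose N * p.parts.countPerms : ℕ) := by
  have hcount := p.countPerms_parts_mul_prod_factorial
  have hchoose := Nat.choose_mul_factorial_mul_factorial
    (Nat.le_add_right N (Multiset.card p.parts))
  rw [Nat.add_sub_cancel_left] at hchoose
  simp only [Pcoeff, Nat.add_sub_cancel]
  rw [Nat.factorial_succ, ← hchoose, ← hcount]
  have : (∏ i ∈ Icc 1 N, ((p.parts.count i).factorial : ℚ)) ≠ 0 :=
    prod_ne_zero_iff.mpr fun i _ => by positivity
  push_cast
  field_simp

theorem succ_nsmul_Pcoeff_smul {M : Type*} [AddCommGroup M] [Module ℚ M] {N : ℕ}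
    (p : N.Partition) (x : M) :
    (N + 1) • Pcoeff (N + 1) p • x =
      ((N + Multiset.card p.parts).choose N * p.parts.countPerms) • x := by
  rw [← Nat.cast_smul_eq_nsmul ℚ, smul_smul, natCast_succ_mul_Pcoeff, Nat.cast_smul_eq_nsmul]

theorem lagrange_inversion_partitions_general {R : Type*} [CommRing R] [Algebra ℚ R]
    (u v : PowerSeries R)
    (hu0 : coeff 0 u = 0) (hu1 : coeff 1 u = 1)
    (hinv : PS.comp v u = PowerSeries.X) :
    ∀ n, 2 ≤ n →
      coeff n v =
        ∑ lam : Nat.Partition (n - 1),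
          Pcoeff n lam •
            ∏ i ∈ Finset.Icc 1 (n - 1), (-(coeff (i + 1) u)) ^ (lam.parts.count i) := by
  intro n hn
  obtain ⟨N, rfl⟩ : ∃ N, n = N + 1 := ⟨n - 1, by omega⟩
  have : IsAddTorsionFree R := .of_module_rat R
  set g : R⟦X⟧ := mk fun i => coeff (i + 1) u
  have hu0' : constantCoeff u = 0 := by simpa using hu0
  have hu : u = X * g := (eq_X_mul_shift_add_const u).trans (by simp [g, hu0'])
  have hg : constantCoeff g = 1 := by simpa [g] using hu1
  have hgh : g * invOfUnit g 1 = 1 := mul_invOfUnit g 1 (by simp [hg])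
  have hw : constantCoeff (1 - g) = 0 := by simp [hg]
  have hv : v.subst (X * g) = X := by rwa [← hu, ← PS.comp_eq_subst_s5 hu0']
  have hc : ∀ i ∈ Icc 1 N, coeff i (1 - g) = -coeff (i + 1) u := fun i hi => by
    rw [map_sub, coeff_one, if_neg (Nat.one_le_iff_ne_zero.mp (mem_Icc.mp hi).1), coeff_mk,
      zero_sub]
  refine nsmul_right_injective (n := N + 1) N.succ_ne_zero ?_
  calc (N + 1) • coeff (N + 1) v
      = coeff N (invOfUnit g 1 ^ (N + 1)) := by
        rw [nsmul_eq_mul, ← natCast_mul_coeff_of_subst_eq_X hgh hv]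
    _ = ∑ m ∈ range (N + 1), ((N + m).choose N : R) * coeff N ((1 - g) ^ m) :=
        coeff_pow_succ_eq_sum_choose_mul hw (by rwa [sub_sub_cancel]) N N
    _ = ∑ p : N.Partition, ((N + Multiset.card p.parts).choose N : R) *
          (p.parts.countPerms * (p.parts.map fun i => coeff i (1 - g)).prod) :=
        sum_range_mul_coeff_pow_eq_sum_partitions hw _ N
    _ = (N + 1) • ∑ p : N.Partition, Pcoeff (N + 1) p •
          ∏ i ∈ Icc 1 N, (-coeff (i + 1) u) ^ p.parts.count i := by
        rw [smul_sum]
        refine sum_congr rfl fun p _ => ?_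
        rw [p.prod_map_parts, prod_congr rfl fun i hi => by rw [hc i hi], succ_nsmul_Pcoeff_smul,
          nsmul_eq_mul]
        push_cast
        ring

theorem lagrange_inversion_partitions {R : Type*} [CommRing R] [Algebra ℚ R]
    (u v : PowerSeries R)
    (hu0 : coeff 0 u = 0) (hu1 : coeff 1 u = 1)
    (hv0 : coeff 0 v = 0) (hv1 : coeff 1 v = 1)
    (hinv : PS.comp v u = PowerSeries.X) :
    ∀ n, 2 ≤ n →
      coeff n v =
        ∑ lam : Nat.Partition (n - 1),
          Pcoeff n lam •
            ∏ i ∈ Finset.Icc 1 (n - 1), (-(coeff (i + 1) u)) ^ (lam.parts.count i) :=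
  lagrange_inversion_partitions_general u v hu0 hu1 hinv
end

section
/- Define d_n \in \mathbb{Z} by d_n = \sum_{\lambda\vdash n-1} P(\lambda) \prod_{i\ge1} ((-1)^i i!)^{\lambda_i} where P(\lambda) = (n-1+\sum_i\lambda_i)!/(n!\prod_i\lambda_i!) for partitions of n-1. Then (-1)^{n-1} d_n > 0 for all n \ge 2, i.e., the middle Betti numbers \dim H^{n-3}(\mathcal{M}^\delta_{0,n}) given by formula (9) of the paper are positive. -/
/-!
Each summand of `d_n` is `(-1)^{n-1}` times a positive integer: the sign is
`∏ᵢ (-1)^{i λᵢ} = (-1)^{∑ i λᵢ} = (-1)^{n-1}`, and `P(λ)` is an integer because a multinomial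
coefficient `(∑ aⱼ)! / ∏ aⱼ!` is divisible by `(∑ aⱼ) / gcd aⱼ`. Applied to the entries
`n, λ₁, λ₂, …`, whose gcd divides both `n` and `∑ i λᵢ = n - 1`, this says that
`n! ∏ λᵢ!` divides `(n - 1 + ∑ λᵢ)!`.
-/

open Finset

/-- `d_n = ∑_{λ ⊢ n-1} P(λ) ∏ᵢ ((-1)ⁱ i!)^{λᵢ}`. -/
noncomputable def dSum (n : ℕ) : ℚ :=
  ∑ lam : Nat.Partition (n - 1),
    Pcoeff n lam *
      ∏ i ∈ Finset.Icc 1 (n - 1), (((-1 : ℚ) ^ i * i.factorial)) ^ (lam.parts.count i)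

open Nat

section Multinomial

variable {ι : Type*} (s : Finset ι) (f : ι → ℕ)

theorem Nat.prod_factorial_dvd_mul_factorial_sum_sub_one [DecidableEq ι] {j : ι} (hj : j ∈ s) :
    ∏ i ∈ s, (f i)! ∣ f j * (∑ i ∈ s, f i - 1)! := by
  rcases Nat.eq_zero_or_pos (f j) with hfj | hfj
  · simp [hfj]
  have hdvd := Nat.prod_factorial_dvd_factorial_sum s (Function.update f j (f j - 1))
  simp_rw [Function.apply_update (fun _ n => n !)] at hdvd
  rw [Finset.prod_update_of_mem hj, Finset.sum_update_of_mem hj] at hdvd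
  have hsum : f j - 1 + ∑ i ∈ s \ {j}, f i = ∑ i ∈ s, f i - 1 := by
    rw [← Finset.add_sum_erase s f hj, Finset.sdiff_singleton_eq_erase]
    omega
  calc ∏ i ∈ s, (f i)! = f j * ((f j - 1)! * ∏ i ∈ s \ {j}, (f i)!) := by
        rw [← Finset.mul_prod_erase s _ hj, Finset.sdiff_singleton_eq_erase, ← mul_assoc,
          Nat.mul_factorial_pred hfj.ne']
    _ ∣ f j * (∑ i ∈ s, f i - 1)! := mul_dvd_mul_left _ (hsum ▸ hdvd)

theorem Nat.prod_factorial_dvd_gcd_mul_factorial_sum_sub_one :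
    ∏ i ∈ s, (f i)! ∣ s.gcd f * (∑ i ∈ s, f i - 1)! := by
  classical
  have h := Finset.dvd_gcd fun j hj => Nat.prod_factorial_dvd_mul_factorial_sum_sub_one s f hj
  rwa [Finset.gcd_mul_right, normalize_eq] at h

end Multinomial

theorem Nat.factorial_succ_mul_prod_factorial_dvd {k : ℕ} (s : Finset ℕ) (m : ℕ → ℕ)
    (h0 : 0 ∉ s) (hs : ∑ i ∈ s, i * m i = k) :
    (k + 1)! * ∏ i ∈ s, (m i)! ∣ (k + ∑ i ∈ s, m i)! := by
  set f := Function.update m 0 (k + 1)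
  have hf : ∀ i ∈ s, f i = m i := fun i hi =>
    Function.update_of_ne (by rintro rfl; exact h0 hi) _ _
  have hgcd : (insert 0 s).gcd f = 1 := by
    have h1 : (insert 0 s).gcd f ∣ k + 1 := by
      simpa [f] using Finset.gcd_dvd (f := f) (Finset.mem_insert_self 0 s)
    have h2 : (insert 0 s).gcd f ∣ k := hs ▸ Finset.dvd_sum fun i hi =>
      (hf i hi ▸ Finset.gcd_dvd (f := f) (Finset.mem_insert_of_mem hi)).mul_left i
    exact Nat.dvd_one.mp ((Nat.dvd_add_right h2).mp h1)
  have h := Nat.prod_factorial_dvd_gcd_mul_factorial_sum_sub_one (insert 0 s) f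
  rw [hgcd, one_mul, Finset.prod_insert h0, Finset.sum_insert h0, Finset.prod_congr rfl
    fun i hi => congrArg _ (hf i hi), Finset.sum_congr rfl hf] at h
  simpa [f, Nat.add_right_comm k 1] using h

theorem Finset.prod_neg_one_pow_mul_pow {R : Type*} [CommRing R] (s : Finset ℕ) (x : ℕ → R)
    (c : ℕ → ℕ) :
    ∏ i ∈ s, ((-1) ^ i * x i) ^ c i = (-1) ^ (∑ i ∈ s, i * c i) * ∏ i ∈ s, x i ^ c i := by
  simp only [mul_pow, ← pow_mul, Finset.prod_mul_distrib, Finset.prod_pow_eq_pow_sum]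

namespace Nat.Partition

variable {k : ℕ} (lam : k.Partition)

theorem mem_Icc_of_mem_parts_s19 {a : ℕ} (ha : a ∈ lam.parts) : a ∈ Icc 1 k :=
  Finset.mem_Icc.mpr ⟨lam.parts_pos ha, (Multiset.le_sum_of_mem ha).trans_eq lam.parts_sum⟩

theorem sum_count_Icc : ∑ i ∈ Icc 1 k, lam.parts.count i = lam.parts.card :=
  Multiset.sum_count_eq_card fun _ => lam.mem_Icc_of_mem_parts_s19

theorem sum_mul_count_Icc : ∑ i ∈ Icc 1 k, i * lam.parts.count i = k := by
  have h := Finset.sum_multiset_count_of_subset lam.parts (Icc 1 k)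
    fun _ ha => lam.mem_Icc_of_mem_parts_s19 (Multiset.mem_toFinset.mp ha)
  simpa only [lam.parts_sum, smul_eq_mul, mul_comm, eq_comm] using h

theorem factorial_succ_mul_prod_factorial_count_dvd :
    (k + 1)! * ∏ i ∈ Icc 1 k, (lam.parts.count i)! ∣ (k + lam.parts.card)! := by
  rw [← lam.sum_count_Icc]
  exact Nat.factorial_succ_mul_prod_factorial_dvd _ _ (by simp) lam.sum_mul_count_Icc

end Nat.Partition

def absSummand (n : ℕ) (lam : (n - 1).Partition) : ℕ :=
  (n - 1 + lam.parts.card)! / (n ! * ∏ i ∈ Icc 1 (n - 1), (lam.parts.count i)!) *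
    ∏ i ∈ Icc 1 (n - 1), i ! ^ lam.parts.count i

section absSummand

variable {n : ℕ} (lam : (n - 1).Partition)

theorem factorial_mul_prod_factorial_count_dvd (hn : 1 ≤ n) :
    n ! * ∏ i ∈ Icc 1 (n - 1), (lam.parts.count i)! ∣ (n - 1 + lam.parts.card)! := by
  simpa only [Nat.sub_add_cancel hn] using lam.factorial_succ_mul_prod_factorial_count_dvd

theorem absSummand_pos (hn : 1 ≤ n) : 0 < absSummand n lam := by
  have hdvd := factorial_mul_prod_factorial_count_dvd lam hn
  exact Nat.mul_pos (Nat.div_pos (Nat.le_of_dvd (by positivity) hdvd) (by positivity))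
    (by positivity)

theorem Pcoeff_mul_prod_eq_absSummand (hn : 1 ≤ n) :
    Pcoeff n lam * ∏ i ∈ Icc 1 (n - 1), ((-1 : ℚ) ^ i * i !) ^ lam.parts.count i =
      (-1) ^ (n - 1) * absSummand n lam := by
  rw [Finset.prod_neg_one_pow_mul_pow, lam.sum_mul_count_Icc, absSummand, Pcoeff,
    Nat.cast_mul, Nat.cast_div (factorial_mul_prod_factorial_count_dvd lam hn) (by positivity)]
  push_cast
  ring

end absSummand

theorem dSum_eq_neg_one_pow_mul_sum {n : ℕ} (hn : 1 ≤ n) :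
    dSum n = (-1) ^ (n - 1) * ∑ lam : (n - 1).Partition, (absSummand n lam : ℚ) := by
  rw [dSum, Finset.mul_sum]
  exact Finset.sum_congr rfl fun lam _ => Pcoeff_mul_prod_eq_absSummand lam hn

theorem dSum_integer_and_sign (n : ℕ) (hn : 2 ≤ n) :
    (∃ z : ℤ, (z : ℚ) = dSum n) ∧ 0 < (-1 : ℚ) ^ (n - 1) * dSum n := by
  have hsum := dSum_eq_neg_one_pow_mul_sum (n := n) (by omega)
  have hpos : 0 < ∑ lam : (n - 1).Partition, absSummand n lam :=
    Finset.sum_pos (fun lam _ => absSummand_pos lam (by omega)) Finset.univ_nonempty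
  refine ⟨⟨(-1) ^ (n - 1) * ∑ lam : (n - 1).Partition, absSummand n lam, ?_⟩, ?_⟩
  · rw [hsum]
    push_cast
    rfl
  · rw [hsum, ← mul_assoc, ← pow_add, Even.neg_one_pow ⟨n - 1, rfl⟩, one_mul]
    exact_mod_cast hpos
end
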